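/- arXiv:2306.01124 — 2 statements merged into one kernel-verified Lean document; each statement's English description precedes it below -/
import Mathlib

section
/- Expansion of fractional-order Bernstein polynomials in terms of the auxiliary polynomials (Equation (8)). Let γ > 0 and let υ ≤ M be natural numbers. Then for every t ∈ [0,1], B^γ_{υ,M}(t) = √(1+2M−2υ) · Σ_{i=0}^{υ} (−1)^i · [C(1+2M−i, υ−i) · C(υ, i) / C(M−i, υ−i)] · B̃^γ_{υ−i, M−i}(t). (Note that C(M−i, υ−i) ≠ 0 since i ≤ υ ≤ M.) -/
open MeasureTheory Finset

/-- Fractional-order Bernstein polynomial `B^γ_{υ,M}` (Equation (6)). -/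
noncomputable def fobPoly (γ : ℝ) (υ M : ℕ) (t : ℝ) : ℝ :=
  Real.sqrt (1 + 2 * (M : ℝ) - 2 * (υ : ℝ)) * (1 - t ^ γ) ^ (M - υ) *
    ∑ i ∈ Finset.range (υ + 1),
      (-1 : ℝ) ^ i * (Nat.choose (1 + 2 * M - i) (υ - i) : ℝ) * (Nat.choose υ i : ℝ) *
        t ^ (γ * ((υ - i : ℕ) : ℝ))

/-- Auxiliary fractional Bernstein polynomial `B̃^γ_{υ,M}`. -/
noncomputable def fobPolyAux (γ : ℝ) (υ M : ℕ) (t : ℝ) : ℝ :=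
  ∑ i ∈ Finset.range (M - υ + 1),
    (-1 : ℝ) ^ i * (Nat.choose M υ : ℝ) * (Nat.choose (M - υ) i : ℝ) *
      t ^ (γ * ((υ + i : ℕ) : ℝ))

lemma fobPolyAux_eq (γ : ℝ) (u m : ℕ) (t : ℝ) (ht : 0 ≤ t) :
    fobPolyAux γ u m t
      = (Nat.choose m u : ℝ) * t ^ (γ * (u : ℝ)) * (1 - t ^ γ) ^ (m - u) := by
  unfold fobPolyAux
  have hx : ∀ n : ℕ, t ^ (γ * (n : ℝ)) = (t ^ γ) ^ n := by
    intro n; rw [Real.rpow_mul ht, Real.rpow_natCast]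
  have h1 : (1 - t ^ γ) ^ (m - u)
      = ∑ i ∈ range (m - u + 1),
          (-(t ^ γ)) ^ i * (1 : ℝ) ^ ((m - u) - i) * ((m - u).choose i : ℝ) := by
    rw [← add_pow]; ring_nf
  rw [h1, Finset.mul_sum]
  apply sum_congr rfl
  intro i _
  rw [hx, hx, pow_add, neg_pow]
  ring

/-- Expansion of fractional-order Bernstein polynomials in terms of the auxiliary
polynomials (Equation (8)). -/
theorem fobPoly_eq_sum_fobPolyAux
    (γ : ℝ) (hγ : 0 < γ) (υ M : ℕ) (hυ : υ ≤ M)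
    (t : ℝ) (ht : t ∈ Set.Icc (0 : ℝ) 1) :
    fobPoly γ υ M t
      = Real.sqrt (1 + 2 * (M : ℝ) - 2 * (υ : ℝ)) *
          ∑ i ∈ Finset.range (υ + 1),
            (-1 : ℝ) ^ i *
              ((Nat.choose (1 + 2 * M - i) (υ - i) : ℝ) * (Nat.choose υ i : ℝ) /
                (Nat.choose (M - i) (υ - i) : ℝ)) *
              fobPolyAux γ (υ - i) (M - i) t := by
  obtain ⟨ht0, ht1⟩ := ht
  unfold fobPoly
  rw [mul_assoc, Finset.mul_sum]
  congr 1
  apply sum_congr rfl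
  intro i hi
  have hiυ : i ≤ υ := Nat.lt_succ_iff.mp (mem_range.mp hi)
  have hle : υ - i ≤ M - i := Nat.sub_le_sub_right hυ i
  have hch : ((M - i).choose (υ - i) : ℝ) ≠ 0 := by
    exact_mod_cast (Nat.choose_pos hle).ne'
  rw [fobPolyAux_eq γ (υ - i) (M - i) t ht0]
  have hsub : M - i - (υ - i) = M - υ := by omega
  rw [hsub]
  field_simp
end

section
/- Weighted orthogonality of the fractional-order Bernstein polynomials (Equation (7)). Let γ > 0, let M be a natural number, and let υ, ϑ ∈ {0,…,M}. Then ∫₀¹ B^γ_{υ,M}(t) · B^γ_{ϑ,M}(t) · t^{γ−1} dt = 0 if υ ≠ ϑ, and ∫₀¹ B^γ_{υ,M}(t)² · t^{γ−1} dt = 1/γ. -/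
open MeasureTheory Finset

/-!
Substituting `u = t ^ γ` reduces the claim to `γ = 1`. There, reversing the order of summation
writes `B_{υ,M}(u) = √(2(M-υ)+1) (1-u)^(M-υ) P_{υ,2M+1-υ}(u)`, where
`P_{n,s} = shiftedJacobi n s`.
Integrating term by term against the Beta integral, the moments `∫ P_{n,s}(u) u^e (1-u)^c` at
`e = 0` become an `n`-th forward difference of binomial coefficients, and
`u^(e+1) (1-u)^c = u^e (1-u)^c - u^e (1-u)^(c+1)` propagates them to all `e`. They vanish for
`e + c + 1 ≤ s < n + c + 1`, which is the off-diagonal case, and are independent of `e ≤ n` when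
`s = n + c + 1`, so the diagonal integral is that constant times `P_{n,s}(1) = C(s, n)`.
-/

open scoped Nat

theorem sum_neg_one_pow_mul_choose_mul_choose_add {R : Type*} [Ring R] (n m r : ℕ) :
    ∑ k ∈ range (n + 1), (-1 : R) ^ (n - k) * n.choose k * (r + k).choose m =
      if n ≤ m then (r.choose (m - n) : R) else 0 := by
  have key : ∑ k ∈ range (n + 1), (-1 : ℤ) ^ (n - k) * n.choose k * (r + k).choose m =
      if n ≤ m then (r.choose (m - n) : ℤ) else 0 := by
    have hΔ := fwdDiff_iter_eq_sum_shift 1 (fun x ↦ (x.choose m : ℤ)) n r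
    simp only [mul_one, smul_eq_mul] at hΔ
    rw [← hΔ]
    split_ifs with h
    · obtain ⟨j, rfl⟩ := Nat.exists_eq_add_of_le h
      simp [fwdDiff_iter_choose]
    · obtain ⟨j, rfl⟩ := Nat.exists_eq_add_of_lt (not_le.mp h)
      have hconst : (fwdDiff 1)^[m] (fun x ↦ (x.choose m : ℤ)) = fun _ ↦ 1 := by
        simpa using fwdDiff_iter_choose 0 m
      rw [show m + j + 1 = j + 1 + m by ring, Function.iterate_add_apply, hconst,
        Function.iterate_succ_apply, fwdDiff_const]
      simp [fwdDiff_iter_eq_sum_shift]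
  have hR := congrArg (Int.cast : ℤ → R) key
  rw [apply_ite (Int.cast : ℤ → R)] at hR
  push_cast at hR
  exact hR

theorem integral_pow_mul_one_sub_pow (p q : ℕ) :
    ∫ x in (0 : ℝ)..1, x ^ p * (1 - x) ^ q = p ! * q ! / (p + q + 1)! := by
  induction q generalizing p with
  | zero =>
    simp only [pow_zero, mul_one, integral_pow, add_zero, Nat.factorial_succ]
    push_cast
    field_simp
    simp
  | succ q ih =>
    have hsplit : ∫ x in (0 : ℝ)..1, x ^ p * (1 - x) ^ (q + 1) =
        (∫ x in (0 : ℝ)..1, x ^ p * (1 - x) ^ q) -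
          ∫ x in (0 : ℝ)..1, x ^ (p + 1) * (1 - x) ^ q := by
      rw [← intervalIntegral.integral_sub ((by fun_prop : Continuous _).intervalIntegrable _ _)
        ((by fun_prop : Continuous _).intervalIntegrable _ _)]
      exact intervalIntegral.integral_congr fun x _ ↦ by ring
    rw [hsplit, ih, ih, show p + 1 + q + 1 = p + (q + 1) + 1 by ring,
      show p + (q + 1) + 1 = (p + q + 1) + 1 by ring]
    simp only [Nat.factorial_succ]
    push_cast
    field_simp
    ring

theorem integral_comp_rpow_mul_rpow_sub_one {γ : ℝ} (hγ : 0 < γ) {g : ℝ → ℝ}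
    (hg : Continuous g) :
    ∫ t in (0 : ℝ)..1, g (t ^ γ) * t ^ (γ - 1) = 1 / γ * ∫ u in (0 : ℝ)..1, g u := by
  have hcont : ContinuousOn (fun t : ℝ ↦ t ^ γ) (Set.uIcc 0 1) := fun x _ ↦
    (Real.continuousAt_rpow_const x γ (Or.inr hγ.le)).continuousWithinAt
  have hderiv : ∀ x ∈ Set.Ioo (min (0 : ℝ) 1) (max 0 1),
      HasDerivWithinAt (fun t : ℝ ↦ t ^ γ) (γ * x ^ (γ - 1)) (Set.Ioi x) x := fun x hx ↦
    (Real.hasDerivAt_rpow_const (Or.inl (by simp at hx; exact hx.1.ne'))).hasDerivWithinAt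
  have hint : IntervalIntegrable (fun t : ℝ ↦ g (t ^ γ) * (γ * t ^ (γ - 1))) volume 0 1 :=
    ((intervalIntegral.intervalIntegrable_rpow' (by linarith)).const_mul γ).continuousOn_mul
      (hg.comp_continuousOn hcont)
  have hsubst := intervalIntegral.integral_comp_mul_deriv''' hcont hderiv hg.continuousOn
    (hg.continuousOn.integrableOn_compact (isCompact_uIcc.image_of_continuousOn hcont))
    ((intervalIntegrable_iff' (a := 0) (b := 1)).mp hint)
  rw [Real.zero_rpow hγ.ne', Real.one_rpow] at hsubst
  rw [← hsubst, ← intervalIntegral.integral_const_mul]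
  refine intervalIntegral.integral_congr fun t _ ↦ ?_
  simp only [Function.comp]
  field_simp

noncomputable def shiftedJacobiCoeff (n s k : ℕ) : ℝ :=
  (-1) ^ (n - k) * n.choose k * (s + k).choose k

/-- For `n ≤ s` this is the shifted Jacobi polynomial `P_n^{(s-n,0)}(2u-1)`. -/
noncomputable def shiftedJacobi (n s : ℕ) (u : ℝ) : ℝ :=
  ∑ k ∈ range (n + 1), shiftedJacobiCoeff n s k * u ^ k

@[fun_prop]
theorem continuous_shiftedJacobi (n s : ℕ) : Continuous (shiftedJacobi n s) := by
  unfold shiftedJacobi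
  fun_prop

theorem shiftedJacobi_one {n s : ℕ} (h : n ≤ s) : shiftedJacobi n s 1 = s.choose n := by
  simp only [shiftedJacobi, shiftedJacobiCoeff, one_pow, mul_one, ← Nat.choose_symm_add]
  rw [sum_neg_one_pow_mul_choose_mul_choose_add, if_pos h, Nat.choose_symm h]

noncomputable def jacobiMoment (n s e c : ℕ) : ℝ :=
  ∫ u in (0 : ℝ)..1, shiftedJacobi n s u * u ^ e * (1 - u) ^ c

theorem jacobiMoment_succ_left (n s e c : ℕ) :
    jacobiMoment n s (e + 1) c = jacobiMoment n s e c - jacobiMoment n s e (c + 1) := by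
  rw [jacobiMoment, jacobiMoment, jacobiMoment, ← intervalIntegral.integral_sub
    ((by fun_prop : Continuous _).intervalIntegrable _ _)
    ((by fun_prop : Continuous _).intervalIntegrable _ _)]
  exact intervalIntegral.integral_congr fun u _ ↦ by ring

theorem jacobiMoment_zero_left (n d c : ℕ) :
    jacobiMoment n (d + c + 1) 0 c =
      if n ≤ d then (c ! * d ! : ℝ) / (d + c + 1)! * (d + c + 1).choose (d - n) else 0 := by
  set s := d + c + 1
  have hbeta : ∀ k, ((s + k).choose k : ℝ) * (k ! * c ! / (k + c + 1)!) =
      c ! * d ! / s ! * (s + k).choose d := by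
    intro k
    have h1 := Nat.choose_mul_factorial_mul_factorial (Nat.le_add_left k s)
    have h2 := Nat.choose_mul_factorial_mul_factorial (show d ≤ s + k by omega)
    rw [Nat.add_sub_cancel] at h1
    rw [show s + k - d = k + c + 1 by omega] at h2
    have h1' : ((s + k).choose k * k ! * s ! : ℝ) = (s + k)! := by exact_mod_cast h1
    have h2' : ((s + k).choose d * d ! * (k + c + 1)! : ℝ) = (s + k)! := by exact_mod_cast h2
    field_simp
    linear_combination h1' - h2'
  have hmoment : ∀ k, ∫ u in (0 : ℝ)..1, shiftedJacobiCoeff n s k * u ^ k * (1 - u) ^ c =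
      shiftedJacobiCoeff n s k * (k ! * c ! / (k + c + 1)!) := by
    intro k
    simp_rw [mul_assoc]
    rw [intervalIntegral.integral_const_mul, integral_pow_mul_one_sub_pow]
  simp only [jacobiMoment, shiftedJacobi, pow_zero, mul_one, sum_mul]
  rw [intervalIntegral.integral_finsetSum fun k _ ↦
    (by fun_prop : Continuous _).intervalIntegrable _ _]
  simp_rw [hmoment, shiftedJacobiCoeff, mul_assoc, hbeta, mul_left_comm _ ((c ! * d ! : ℝ) / s !),
    ← mul_sum, ← mul_assoc, sum_neg_one_pow_mul_choose_mul_choose_add]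
  split_ifs <;> simp

theorem jacobiMoment_eq_zero {n s e c : ℕ} (hs : s < n + c + 1) (he : e + c + 1 ≤ s) :
    jacobiMoment n s e c = 0 := by
  induction e generalizing c with
  | zero =>
    obtain ⟨d, rfl⟩ : ∃ d, s = d + c + 1 := ⟨s - c - 1, by omega⟩
    rw [jacobiMoment_zero_left, if_neg (by omega)]
  | succ e ih =>
    rw [jacobiMoment_succ_left, ih (by omega) (by omega), ih (by omega) (by omega), sub_zero]

theorem jacobiMoment_of_add_eq {n s e c : ℕ} (hs : n + c + 1 = s) (he : e ≤ n) :
    jacobiMoment n s e c = n ! * c ! / s ! := by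
  induction e with
  | zero =>
    subst hs
    rw [jacobiMoment_zero_left, if_pos le_rfl, Nat.sub_self, Nat.choose_zero_right]
    push_cast
    ring
  | succ e ih =>
    rw [jacobiMoment_succ_left, ih (by omega), jacobiMoment_eq_zero (by omega) (by omega), sub_zero]

theorem integral_shiftedJacobi_mul_shiftedJacobi_mul_one_sub_pow (n s m s' c : ℕ) :
    ∫ u in (0 : ℝ)..1, shiftedJacobi n s u * shiftedJacobi m s' u * (1 - u) ^ c =
      ∑ j ∈ range (m + 1), shiftedJacobiCoeff m s' j * jacobiMoment n s j c := by
  have hexpand : ∀ u, shiftedJacobi m s' u =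
      ∑ j ∈ range (m + 1), shiftedJacobiCoeff m s' j * u ^ j := fun _ ↦ rfl
  simp_rw [hexpand, mul_sum, sum_mul]
  rw [intervalIntegral.integral_finsetSum fun j _ ↦
    (by fun_prop : Continuous _).intervalIntegrable _ _]
  refine sum_congr rfl fun j _ ↦ ?_
  rw [jacobiMoment, ← intervalIntegral.integral_const_mul]
  exact intervalIntegral.integral_congr fun u _ ↦ by ring

theorem integral_shiftedJacobi_mul_shiftedJacobi_mul_one_sub_pow_eq_zero {n s m s' c : ℕ}
    (hs : s < n + c + 1) (hm : m + c + 1 ≤ s) :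
    ∫ u in (0 : ℝ)..1, shiftedJacobi n s u * shiftedJacobi m s' u * (1 - u) ^ c = 0 := by
  rw [integral_shiftedJacobi_mul_shiftedJacobi_mul_one_sub_pow]
  refine sum_eq_zero fun j hj ↦ ?_
  rw [jacobiMoment_eq_zero hs (by have := mem_range.mp hj; omega), mul_zero]

theorem integral_shiftedJacobi_mul_self_mul_one_sub_pow (n c : ℕ) :
    ∫ u in (0 : ℝ)..1, shiftedJacobi n (n + c + 1) u * shiftedJacobi n (n + c + 1) u *
      (1 - u) ^ c = 1 / (c + 1) := by
  rw [integral_shiftedJacobi_mul_shiftedJacobi_mul_one_sub_pow,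
    sum_congr rfl fun j hj ↦ by
      rw [jacobiMoment_of_add_eq rfl (Nat.lt_succ_iff.mp (mem_range.mp hj))],
    ← sum_mul]
  have hone : ∑ j ∈ range (n + 1), shiftedJacobiCoeff n (n + c + 1) j =
      shiftedJacobi n (n + c + 1) 1 := by
    simp [shiftedJacobi]
  have hchoose := Nat.choose_mul_factorial_mul_factorial (show n ≤ n + c + 1 by omega)
  rw [show n + c + 1 - n = c + 1 by omega, Nat.factorial_succ] at hchoose
  have hchoose' : ((n + c + 1).choose n * n ! * ((c + 1) * c !) : ℝ) = (n + c + 1)! := by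
    exact_mod_cast hchoose
  rw [hone, shiftedJacobi_one (by omega)]
  field_simp
  linear_combination hchoose'

theorem fobPoly_eq_fobPoly_one_rpow (γ : ℝ) (υ M : ℕ) {t : ℝ} (ht : 0 ≤ t) :
    fobPoly γ υ M t = fobPoly 1 υ M (t ^ γ) := by
  simp only [fobPoly, Real.rpow_one, one_mul, Real.rpow_mul ht]

theorem fobPoly_one_eq_shiftedJacobi {υ M : ℕ} (hυ : υ ≤ M) (u : ℝ) :
    fobPoly 1 υ M u = √(1 + 2 * (M : ℝ) - 2 * (υ : ℝ)) * (1 - u) ^ (M - υ) *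
      shiftedJacobi υ (2 * M + 1 - υ) u := by
  simp only [fobPoly, shiftedJacobi, shiftedJacobiCoeff, Real.rpow_one, one_mul, Real.rpow_natCast]
  rw [← sum_range_reflect]
  refine congrArg _ (sum_congr rfl fun i hi ↦ ?_)
  have hi : i ≤ υ := Nat.lt_succ_iff.mp (mem_range.mp hi)
  rw [show υ + 1 - 1 - i = υ - i by omega, show υ - (υ - i) = i by omega,
    Nat.choose_symm hi, show 1 + 2 * M - (υ - i) = 2 * M + 1 - υ + i by omega]
  ring

theorem integral_fobPoly_one_mul {υ ϑ M : ℕ} (hυ : υ ≤ M) (hϑ : ϑ ≤ M) :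
    ∫ u in (0 : ℝ)..1, fobPoly 1 υ M u * fobPoly 1 ϑ M u =
      √(1 + 2 * (M : ℝ) - 2 * (υ : ℝ)) * √(1 + 2 * (M : ℝ) - 2 * (ϑ : ℝ)) *
        ∫ u in (0 : ℝ)..1, shiftedJacobi υ (2 * M + 1 - υ) u *
          shiftedJacobi ϑ (2 * M + 1 - ϑ) u * (1 - u) ^ ((M - υ) + (M - ϑ)) := by
  simp_rw [fobPoly_one_eq_shiftedJacobi hυ, fobPoly_one_eq_shiftedJacobi hϑ,
    ← intervalIntegral.integral_const_mul]
  exact intervalIntegral.integral_congr fun u _ ↦ by ring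

theorem integral_fobPoly_one_mul_of_lt {υ ϑ M : ℕ} (hϑυ : ϑ < υ) (hυ : υ ≤ M) :
    ∫ u in (0 : ℝ)..1, fobPoly 1 υ M u * fobPoly 1 ϑ M u = 0 := by
  rw [integral_fobPoly_one_mul hυ (by omega),
    integral_shiftedJacobi_mul_shiftedJacobi_mul_one_sub_pow_eq_zero (by omega) (by omega),
    mul_zero]

theorem integral_fobPoly_one_mul_self {υ M : ℕ} (hυ : υ ≤ M) :
    ∫ u in (0 : ℝ)..1, fobPoly 1 υ M u * fobPoly 1 υ M u = 1 := by
  have hs : 2 * M + 1 - υ = υ + (M - υ + (M - υ)) + 1 := by omega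
  have hυ' : (υ : ℝ) ≤ M := by exact_mod_cast hυ
  rw [integral_fobPoly_one_mul hυ hυ, hs, integral_shiftedJacobi_mul_self_mul_one_sub_pow,
    Real.mul_self_sqrt (by linarith)]
  push_cast [Nat.cast_sub hυ]
  rw [mul_one_div, div_eq_one_iff_eq (by linarith)]
  ring

/-- Weighted orthogonality of the fractional-order Bernstein polynomials (Equation (7)). -/
theorem fobPoly_orthogonality
    (γ : ℝ) (hγ : 0 < γ) (M : ℕ) (υ ϑ : ℕ) (hυ : υ ≤ M) (hϑ : ϑ ≤ M) :
    (∫ t in (0 : ℝ)..1, fobPoly γ υ M t * fobPoly γ ϑ M t * t ^ (γ - 1))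
      = if υ = ϑ then 1 / γ else 0 := by
  have hcont : Continuous fun u ↦ fobPoly 1 υ M u * fobPoly 1 ϑ M u := by
    simp_rw [fobPoly_one_eq_shiftedJacobi hυ, fobPoly_one_eq_shiftedJacobi hϑ]
    fun_prop
  calc (∫ t in (0 : ℝ)..1, fobPoly γ υ M t * fobPoly γ ϑ M t * t ^ (γ - 1))
      = ∫ t in (0 : ℝ)..1, fobPoly 1 υ M (t ^ γ) * fobPoly 1 ϑ M (t ^ γ) * t ^ (γ - 1) :=
        intervalIntegral.integral_congr fun t ht ↦ by
          have h0 : 0 ≤ t := by simp_all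
          rw [fobPoly_eq_fobPoly_one_rpow γ υ M h0, fobPoly_eq_fobPoly_one_rpow γ ϑ M h0]
    _ = 1 / γ * ∫ u in (0 : ℝ)..1, fobPoly 1 υ M u * fobPoly 1 ϑ M u :=
        integral_comp_rpow_mul_rpow_sub_one hγ hcont
    _ = if υ = ϑ then 1 / γ else 0 := by
        rcases lt_trichotomy υ ϑ with h | rfl | h
        · simp_rw [mul_comm (fobPoly 1 υ M _)]
          rw [integral_fobPoly_one_mul_of_lt h hϑ, if_neg h.ne, mul_zero]
        · rw [integral_fobPoly_one_mul_self hυ, if_pos rfl, mul_one]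
        · rw [integral_fobPoly_one_mul_of_lt h hυ, if_neg h.ne', mul_zero]
end
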